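/- Let {H_n} be a Positive Linear Recurrence Sequence with length L and size S, and suppose E[K_r] = a·r + b + f(r) for all r > L, where a, b are constants. For n > 2L and 0 ≤ t < S, the conditional expectation satisfies E[K_n | Z_n = t] = a(n − ℓ(t)) + b + f(n − ℓ(t)) + t. -/

import Mathlib

open scoped BigOperators
open Filter

/-- A Positive Linear Recurrence Sequence (PLRS): a sequence `H` of positive integers
satisfying `H (n+1) = c 1 * H n + ⋯ + c L * H (n+1-L)` for `n ≥ L`, with
`H 1 = 1` and initial conditions `H (n+1) = c 1 * H n + ⋯ + c n * H 1 + 1` for `1 ≤ n < L`. -/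
structure PLRS where
  /-- the length of the recurrence -/
  L : ℕ
  /-- the coefficients of the recurrence (indexed from 1) -/
  c : ℕ → ℕ
  /-- the sequence itself (indexed from 1) -/
  H : ℕ → ℕ
  L_pos : 0 < L
  c1_pos : 0 < c 1
  cL_pos : 0 < c L
  H_pos : ∀ n, 1 ≤ n → 0 < H n
  H_one : H 1 = 1
  H_rec : ∀ n, L ≤ n → H (n + 1) = ∑ i ∈ Finset.Icc 1 L, c i * H (n + 1 - i)
  H_init : ∀ n, 1 ≤ n → n < L → H (n + 1) = (∑ i ∈ Finset.Icc 1 n, c i * H (n + 1 - i)) + 1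

namespace PLRS

/-- The size `S = c 1 + ⋯ + c L` of a PLRS. -/
def size (P : PLRS) : ℕ := ∑ i ∈ Finset.Icc 1 P.L, P.c i

/-- Legality of a coefficient sequence `(a_1, …, a_m)` (as a list), not including the
requirement `a_1 > 0`: either (Condition 1) `m < L` and `a_i = c_i` for all `i`, or
(Condition 2) there is `s ∈ {1, …, L}` with `a_1 = c_1, …, a_{s-1} = c_{s-1}`, `a_s < c_s`,
and `(a_{s+1}, …, a_m)` legal (possibly empty). -/
inductive IsLegal (P : PLRS) : List ℕ → Prop
  | cond1 (m : ℕ) (h1 : 1 ≤ m) (h2 : m < P.L) :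
      IsLegal P ((List.range m).map fun i => P.c (i + 1))
  | cond2 (s : ℕ) (hs1 : 1 ≤ s) (hs2 : s ≤ P.L) (a : ℕ) (ha : a < P.c s)
      (rest : List ℕ) (hrest : IsLegal P rest) :
      IsLegal P (((List.range (s - 1)).map fun i => P.c (i + 1)) ++ a :: rest)
  | cond2_last (s : ℕ) (hs1 : 1 ≤ s) (hs2 : s ≤ P.L) (a : ℕ) (ha : a < P.c s) :
      IsLegal P (((List.range (s - 1)).map fun i => P.c (i + 1)) ++ [a])

/-- A legal decomposition: a legal coefficient sequence with `a_1 > 0`. -/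
def LegalDecomp (P : PLRS) (l : List ℕ) : Prop := P.IsLegal l ∧ 0 < l.headI

/-- The value `∑_{i=1}^m a_i H_{m+1-i}` of a coefficient sequence `(a_1, …, a_m)`. -/
def value (P : PLRS) (l : List ℕ) : ℕ :=
  ∑ i ∈ Finset.range l.length, l.getD i 0 * P.H (l.length - i)

/-- `Ω_n`: the set of legal decompositions of integers in `[H_n, H_{n+1})`. -/
def Omega (P : PLRS) (n : ℕ) : Set (List ℕ) :=
  {l | P.LegalDecomp l ∧ P.H n ≤ P.value l ∧ P.value l < P.H (n + 1)}

/-- Expectation of `g` under the uniform probability measure on a (finite) set `A`. -/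
noncomputable def expectOn (A : Set (List ℕ)) (g : List ℕ → ℝ) : ℝ :=
  (∑ᶠ l ∈ A, g l) / (A.ncard : ℝ)

/-- Variance of `g` under the uniform probability measure on a (finite) set `A`. -/
noncomputable def varOn (A : Set (List ℕ)) (g : List ℕ → ℝ) : ℝ :=
  expectOn A (fun l => g l ^ 2) - (expectOn A g) ^ 2

/-- Expectation of `g` under the uniform probability measure on `Ω_n`. -/
noncomputable def expect (P : PLRS) (n : ℕ) (g : List ℕ → ℝ) : ℝ := expectOn (P.Omega n) g

/-- Probability of the event `A` under the uniform probability measure on `Ω_n`. -/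
noncomputable def prob (P : PLRS) (n : ℕ) (A : Set (List ℕ)) : ℝ :=
  ((P.Omega n ∩ A).ncard : ℝ) / ((P.Omega n).ncard : ℝ)

/-- `E[K_n]`, the expected number of summands on `Ω_n`. -/
noncomputable def expectK (P : PLRS) (n : ℕ) : ℝ := P.expect n fun l => (l.sum : ℝ)

/-- `Var[K_n]`, the variance of the number of summands on `Ω_n`. -/
noncomputable def varK (P : PLRS) (n : ℕ) : ℝ := varOn (P.Omega n) fun l => (l.sum : ℝ)

/-- The first index (0-based) at which the coefficient list disagrees with `c`. -/
def firstMismatch (P : PLRS) (l : List ℕ) : Option ℕ :=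
  (List.range l.length).find? fun i => l.getD i 0 != P.c (i + 1)

/-- The block decomposition of a legal coefficient sequence: repeatedly split off the
Type 2 block `(c_1, …, c_{s-1}, a_s)` with `a_s ≠ c_s`; if the whole remaining sequence
agrees with `c` it is a single (Type 1) block. -/
def blocks (P : PLRS) (l : List ℕ) : List (List ℕ) :=
  if h : l = [] then []
  else
    match P.firstMismatch l with
    | none => [l]
    | some i => l.take (i + 1) :: P.blocks (l.drop (i + 1))
termination_by l.length
decreasing_by
  have hl : 0 < l.length := List.length_pos_iff.mpr h
  simp only [List.length_drop]
  omega

/-- The second-to-last block of a legal decomposition. -/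
def stlBlock (P : PLRS) (l : List ℕ) : List ℕ := ((P.blocks l).reverse).getD 1 []

/-- `Z_n(ω)`: the size (sum of coefficients) of the second-to-last block. -/
def Z (P : PLRS) (l : List ℕ) : ℕ := (P.stlBlock l).sum

/-- The length function `ℓ(t)`: the length of the Type 2 block of size `t`, i.e., the least
`s` with `t < c_1 + ⋯ + c_s`. -/
noncomputable def ell (P : PLRS) (t : ℕ) : ℕ :=
  sInf {s : ℕ | t < ∑ i ∈ Finset.Icc 1 s, P.c i}

/-- `L_n(ω) = ℓ(Z_n(ω))`: the length of the second-to-last block. -/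
noncomputable def Lfn (P : PLRS) (l : List ℕ) : ℕ := P.ell (P.Z l)

/-- `h_t`: remove the second-to-last block of a legal decomposition. -/
def removeSTL (P : PLRS) (l : List ℕ) : List ℕ :=
  ((((P.blocks l).reverse).eraseIdx 1).reverse).flatten

/-- The Type 2 block of size `t`: `(c_1, …, c_{ℓ(t)-1}, t - (c_1 + ⋯ + c_{ℓ(t)-1}))`. -/
noncomputable def type2Block (P : PLRS) (t : ℕ) : List ℕ :=
  ((List.range (P.ell t - 1)).map fun i => P.c (i + 1)) ++
    [t - ∑ i ∈ Finset.Icc 1 (P.ell t - 1), P.c i]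

/-- Insert the Type 2 block of size `t` immediately before the last block. -/
noncomputable def insertSTL (P : PLRS) (t : ℕ) (l : List ℕ) : List ℕ :=
  ((((P.blocks l).reverse).insertIdx 1 (P.type2Block t)).reverse).flatten

/-- A Type 1 block: `(c_1, …, c_m)` with `1 ≤ m < L`. -/
def IsType1Block (P : PLRS) (bl : List ℕ) : Prop :=
  ∃ m, 1 ≤ m ∧ m < P.L ∧ bl = (List.range m).map fun i => P.c (i + 1)

/-- A Type 2 block: `(c_1, …, c_{s-1}, a)` with `1 ≤ s ≤ L` and `a < c_s`. -/
def IsType2Block (P : PLRS) (bl : List ℕ) : Prop :=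
  ∃ s, 1 ≤ s ∧ s ≤ P.L ∧ ∃ a, a < P.c s ∧
    bl = ((List.range (s - 1)).map fun i => P.c (i + 1)) ++ [a]

/-- Conditional expectation of `g` on `Ω_n` given `Z_n = t`. -/
noncomputable def condExpect (P : PLRS) (n t : ℕ) (g : List ℕ → ℝ) : ℝ :=
  expectOn (P.Omega n ∩ {l | P.Z l = t}) g

end PLRS

open PLRS

/-!
For `n > 2L` a decomposition in `Ω_n` has at least three blocks, so its second-to-last block
is a Type 2 block; a Type 2 block is determined by its size `t`, being `type2Block t` of length
`ℓ(t)`. Removing it is a bijection from `{ω ∈ Ω_n | Z_n(ω) = t}` onto `Ω_{n-ℓ(t)}`, inverted by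
inserting `type2Block t` before the last block, and it lowers the number of summands by exactly
`t`. Lengths are the right bookkeeping because `Ω_m` consists precisely of the legal
decompositions of length `m`: a legal sequence of length `m` has value in `[H_m, H_{m+1})` and
`H` is strictly increasing. Hence `E[K_n | Z_n = t] = E[K_{n-ℓ(t)}] + t`, and the hypothesis at
`r = n - ℓ(t) > L` gives the formula.
-/

lemma List.headI_append_of_ne_nil {α : Type*} [Inhabited α] {l₁ : List α} (l₂ : List α)
    (h : l₁ ≠ []) : (l₁ ++ l₂).headI = l₁.headI := by
  obtain ⟨x, l, rfl⟩ := List.exists_cons_of_ne_nil h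
  rfl

namespace PLRS

variable (P : PLRS)

def coeffList (s : ℕ) : List ℕ := (List.range s).map fun i => P.c (i + 1)

def coeffSum (s : ℕ) : ℕ := ∑ i ∈ Finset.Icc 1 s, P.c i

@[simp] lemma length_coeffList (s : ℕ) : (P.coeffList s).length = s := by simp [coeffList]

lemma coeffList_succ (s : ℕ) : P.coeffList (s + 1) = P.coeffList s ++ [P.c (s + 1)] := by
  simp [coeffList, List.range_succ]

lemma coeffSum_succ (s : ℕ) : P.coeffSum (s + 1) = P.coeffSum s + P.c (s + 1) :=
  Finset.sum_Icc_succ_top (by omega) _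

@[simp] lemma sum_coeffList (s : ℕ) : (P.coeffList s).sum = P.coeffSum s := by
  induction s with
  | zero => simp [coeffList, coeffSum]
  | succ s ih => simp [coeffList_succ, coeffSum_succ, ih]

lemma coeffSum_mono : Monotone P.coeffSum := fun _ _ h =>
  Finset.sum_le_sum_of_subset (Finset.Icc_subset_Icc le_rfl h)

lemma getD_coeffList {i s : ℕ} (h : i < s) : (P.coeffList s).getD i 0 = P.c (i + 1) := by
  simp [coeffList, h]

lemma headI_coeffList {s : ℕ} (h : 1 ≤ s) : (P.coeffList s).headI = P.c 1 := by
  obtain ⟨s, rfl⟩ := Nat.exists_eq_add_of_le' h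
  simp [coeffList, List.range_succ_eq_map]

lemma one_lt_size_iff : 1 < P.size ↔ 1 < P.c 1 ∨ 1 < P.L := by
  rcases Nat.lt_or_ge 1 P.L with hL | hL
  · have hpair : P.c 1 + P.c P.L ≤ P.size := by
      rw [size, ← Finset.sum_pair (show 1 ≠ P.L by omega)]
      exact Finset.sum_le_sum_of_subset (by
        intro i; simp only [Finset.mem_insert, Finset.mem_singleton, Finset.mem_Icc]; omega)
    have := P.cL_pos
    have := P.c1_pos
    simp only [hL, or_true, iff_true]
    omega
  · have hL1 : P.L = 1 := le_antisymm hL P.L_pos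
    simp [size, hL1]

lemma H_lt_H_succ (h : 1 < P.size) {n : ℕ} (hn : 1 ≤ n) : P.H n < P.H (n + 1) := by
  have hHn := P.H_pos n hn
  have hc1 := P.c1_pos
  rcases lt_or_ge n P.L with hnL | hLn
  · have : P.c 1 * P.H n ≤ ∑ i ∈ Finset.Icc 1 n, P.c i * P.H (n + 1 - i) :=
      Finset.single_le_sum (f := fun i => P.c i * P.H (n + 1 - i))
        (fun _ _ => Nat.zero_le _) (by simp [hn])
    rw [P.H_init n hn hnL]
    nlinarith
  · -- `H ≥ 1` bounds the terms `i ≥ 2` of the recurrence below by `c i`, so that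
    -- `H (n + 1) ≥ c 1 * H n + (S - c 1) > H n`
    have htail : ∑ i ∈ Finset.Ioc 1 P.L, P.c i ≤
        ∑ i ∈ Finset.Ioc 1 P.L, P.c i * P.H (n + 1 - i) :=
      Finset.sum_le_sum fun i hi => by
        simp only [Finset.mem_Ioc] at hi
        exact Nat.le_mul_of_pos_right _ (P.H_pos _ (by omega))
    have hsize : P.size = P.c 1 + ∑ i ∈ Finset.Ioc 1 P.L, P.c i :=
      (Finset.add_sum_Ioc_eq_sum_Icc P.L_pos).symm
    rw [P.H_rec n hLn, ← Finset.add_sum_Ioc_eq_sum_Icc P.L_pos, Nat.add_sub_cancel]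
    nlinarith

lemma strictMonoOn_H (h : 1 < P.size) : StrictMonoOn P.H (Set.Ici 1) :=
  strictMonoOn_Ici_of_pred_lt fun m hm => by
    rw [Order.pred_eq_sub_one]
    simpa [Nat.sub_add_cancel hm.le] using P.H_lt_H_succ h (n := m - 1) (by omega)

lemma sum_c_mul_H_le_H_succ {s m : ℕ} (hsL : s ≤ P.L) (hsm : s ≤ m) (hm : 1 ≤ m) :
    ∑ j ∈ Finset.Icc 1 s, P.c j * P.H (m + 1 - j) ≤ P.H (m + 1) := by
  rcases lt_or_ge m P.L with hmL | hLm
  · rw [P.H_init m hm hmL]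
    exact (Finset.sum_le_sum_of_subset (Finset.Icc_subset_Icc le_rfl hsm)).trans (by omega)
  · rw [P.H_rec m hLm]
    exact Finset.sum_le_sum_of_subset (Finset.Icc_subset_Icc le_rfl hsL)

lemma value_append (xs ys : List ℕ) :
    P.value (xs ++ ys) =
      ∑ i ∈ Finset.range xs.length, xs.getD i 0 * P.H (xs.length + ys.length - i) +
        P.value ys := by
  rw [value, List.length_append, Finset.sum_range_add]
  congr 1
  · refine Finset.sum_congr rfl fun i hi => ?_
    rw [List.getD_append _ _ _ _ (Finset.mem_range.mp hi)]
  · refine Finset.sum_congr rfl fun i _ => ?_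
    rw [List.getD_append_right _ _ _ _ (by omega), Nat.add_sub_cancel_left,
      Nat.add_sub_add_left]

lemma value_cons (x : ℕ) (l : List ℕ) :
    P.value (x :: l) = x * P.H (l.length + 1) + P.value l := by
  simpa [add_comm] using P.value_append [x] l

lemma value_coeffList_append (k : ℕ) (ys : List ℕ) :
    P.value (P.coeffList k ++ ys) =
      ∑ j ∈ Finset.Icc 1 k, P.c j * P.H (k + ys.length + 1 - j) + P.value ys := by
  rw [value_append, length_coeffList, ← Finset.Ico_add_one_right_eq_Icc,
    Finset.sum_Ico_eq_sum_range, Nat.add_sub_cancel]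
  congr 1
  refine Finset.sum_congr rfl fun i hi => ?_
  rw [P.getD_coeffList (Finset.mem_range.mp hi), add_comm 1 i]
  congr 2
  omega

lemma headI_mul_H_le_value (l : List ℕ) : l.headI * P.H l.length ≤ P.value l := by
  cases l with
  | nil => simp
  | cons x l => rw [value_cons]; simp

lemma le_value_of_mem {x : ℕ} {l : List ℕ} (hx : x ∈ l) : x ≤ P.value l := by
  induction l with
  | nil => simp at hx
  | cons y l ih =>
    rw [value_cons]
    rcases List.mem_cons.mp hx with rfl | hx
    · exact (Nat.le_mul_of_pos_right _ (P.H_pos _ (by omega))).trans (Nat.le_add_right _ _)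
    · exact (ih hx).trans (Nat.le_add_left _ _)

lemma value_coeffList_append_cons_lt {s a : ℕ} {rest : List ℕ} (hs : 1 ≤ s) (hsL : s ≤ P.L)
    (ha : a < P.c s) (hrest : P.value rest < P.H (rest.length + 1)) :
    P.value (P.coeffList (s - 1) ++ a :: rest) <
      P.H ((P.coeffList (s - 1) ++ a :: rest).length + 1) := by
  obtain ⟨k, rfl⟩ := Nat.exists_eq_add_of_le' hs
  set r := rest.length
  have hlast : (a + 1) * P.H (r + 1) ≤ P.c (k + 1) * P.H (r + 1) :=
    Nat.mul_le_mul_right _ ha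
  have hrec := P.sum_c_mul_H_le_H_succ hsL (m := k + 1 + r) (by omega) (by omega)
  rw [Finset.sum_Icc_succ_top (by omega), show k + 1 + r + 1 - (k + 1) = r + 1 by omega] at hrec
  rw [value_coeffList_append, value_cons]
  simp only [Nat.add_sub_cancel, List.length_append, length_coeffList, List.length_cons]
  rw [show k + (r + 1) + 1 = k + 1 + r + 1 by omega]
  nlinarith

lemma value_lt_H_of_isLegal {l : List ℕ} (hl : P.IsLegal l) :
    P.value l < P.H (l.length + 1) := by
  induction hl with
  | cond1 m h1 h2 =>
    have hval := P.value_coeffList_append m []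
    change P.value (P.coeffList m) < P.H ((P.coeffList m).length + 1)
    rw [List.append_nil] at hval
    rw [hval, length_coeffList, P.H_init m h1 h2]
    simp [value]
  | cond2 s hs1 hs2 a ha rest _ ih => exact P.value_coeffList_append_cons_lt hs1 hs2 ha ih
  | cond2_last s hs1 hs2 a ha =>
    exact P.value_coeffList_append_cons_lt hs1 hs2 ha (by simp [value, P.H_one])

lemma one_lt_size_of_legalDecomp {l : List ℕ} (hl : P.LegalDecomp l) : 1 < P.size := by
  rw [one_lt_size_iff]
  by_contra! hdeg
  have hL : P.L = 1 := le_antisymm hdeg.2 P.L_pos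
  have hc : P.c 1 = 1 := le_antisymm hdeg.1 P.c1_pos
  -- with `L = 1` and `c 1 = 1` every legal sequence starts with a coefficient `a < c 1 = 1`
  obtain ⟨hleg, hhead⟩ := hl
  cases hleg with
  | cond1 m h1 h2 => omega
  | cond2 s hs1 hs2 a ha =>
    obtain rfl : s = 1 := by omega
    simp_all
  | cond2_last s hs1 hs2 a ha =>
    obtain rfl : s = 1 := by omega
    simp_all

lemma mem_Omega_iff {n : ℕ} (hn : 1 ≤ n) {l : List ℕ} :
    l ∈ P.Omega n ↔ P.LegalDecomp l ∧ l.length = n := by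
  refine ⟨fun ⟨hl, hlow, hhigh⟩ => ⟨hl, ?_⟩, fun ⟨hl, hlen⟩ => ⟨hl, ?_, ?_⟩⟩
  · have hmono := P.strictMonoOn_H (P.one_lt_size_of_legalDecomp hl)
    have hlen : 1 ≤ l.length := List.length_pos_iff.mpr fun h => by simp [h, LegalDecomp] at hl
    have hupper := P.value_lt_H_of_isLegal hl.1
    have hlower : P.H l.length ≤ P.value l :=
      (Nat.le_mul_of_pos_left _ hl.2).trans (P.headI_mul_H_le_value l)
    have h1 := (hmono.lt_iff_lt (a := l.length) (b := n + 1) hlen (by simp)).mp (by omega)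
    have h2 := (hmono.lt_iff_lt (a := n) (b := l.length + 1) hn (by simp)).mp (by omega)
    omega
  · exact hlen ▸ (Nat.le_mul_of_pos_left _ hl.2).trans (P.headI_mul_H_le_value l)
  · exact hlen ▸ P.value_lt_H_of_isLegal hl.1

lemma Omega_finite {n : ℕ} (hn : 1 ≤ n) : (P.Omega n).Finite := by
  refine ((List.finite_length_eq (Fin (P.H (n + 1))) n).image (List.map Fin.val)).subset ?_
  intro l hl
  have hlt : ∀ x ∈ l, x < P.H (n + 1) := fun x hx => (P.le_value_of_mem hx).trans_lt hl.2.2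
  lift l to List (Fin (P.H (n + 1))) using hlt
  exact ⟨l, by simpa using ((P.mem_Omega_iff hn).mp hl).2, rfl⟩

lemma firstMismatch_coeffList (m : ℕ) : P.firstMismatch (P.coeffList m) = none := by
  rw [firstMismatch, List.find?_eq_none]
  intro i hi
  rw [length_coeffList, List.mem_range] at hi
  rw [P.getD_coeffList hi]
  simp

lemma getD_coeffList_append_of_lt {k i : ℕ} (ys : List ℕ) (hi : i < k) :
    (P.coeffList k ++ ys).getD i 0 = P.c (i + 1) := by
  rw [List.getD_append _ _ _ _ (by simpa using hi), P.getD_coeffList hi]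

lemma firstMismatch_coeffList_append_cons {k a : ℕ} (rest : List ℕ) (ha : a ≠ P.c (k + 1)) :
    P.firstMismatch (P.coeffList k ++ a :: rest) = some k := by
  rw [firstMismatch, List.find?_range_eq_some]
  refine ⟨?_, by simp, fun j hj => by rw [P.getD_coeffList_append_of_lt _ hj]; simp⟩
  rw [List.getD_append_right _ _ _ _ (by simp)]
  simpa using ha

lemma blocks_nil : P.blocks [] = [] := by
  rw [blocks, dif_pos rfl]

lemma blocks_coeffList {m : ℕ} (hm : 1 ≤ m) : P.blocks (P.coeffList m) = [P.coeffList m] := by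
  rw [blocks, dif_neg (by simp [← List.length_pos_iff]; omega), firstMismatch_coeffList]

lemma blocks_coeffList_append_cons {k a : ℕ} (rest : List ℕ) (ha : a ≠ P.c (k + 1)) :
    P.blocks (P.coeffList k ++ a :: rest) = (P.coeffList k ++ [a]) :: P.blocks rest := by
  have hsplit : P.coeffList k ++ a :: rest = (P.coeffList k ++ [a]) ++ rest := by simp
  rw [blocks, dif_neg (by simp), P.firstMismatch_coeffList_append_cons rest ha]
  simp only
  rw [hsplit, List.take_left' (by simp), List.drop_left' (by simp)]

inductive IsBlockChain : List (List ℕ) → Prop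
  | single_type1 {b : List ℕ} : P.IsType1Block b → IsBlockChain [b]
  | single_type2 {b : List ℕ} : P.IsType2Block b → IsBlockChain [b]
  | cons {b : List ℕ} {bs : List (List ℕ)} : P.IsType2Block b → IsBlockChain bs →
      IsBlockChain (b :: bs)

variable {P}

lemma IsType2Block.exists_eq {b : List ℕ} (h : P.IsType2Block b) :
    ∃ k a, k < P.L ∧ a < P.c (k + 1) ∧ b = P.coeffList k ++ [a] := by
  obtain ⟨s, hs1, hs2, a, ha, rfl⟩ := h
  exact ⟨s - 1, a, by omega, by rwa [Nat.sub_add_cancel hs1], rfl⟩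

lemma IsBlockChain.isLegal_flatten {bs : List (List ℕ)} (h : P.IsBlockChain bs) :
    P.IsLegal bs.flatten := by
  induction h with
  | single_type1 hb =>
    obtain ⟨m, h1, h2, rfl⟩ := hb
    simpa using IsLegal.cond1 m h1 h2
  | single_type2 hb =>
    obtain ⟨s, h1, h2, a, ha, rfl⟩ := hb
    simpa using IsLegal.cond2_last s h1 h2 a ha
  | cons hb _ ih =>
    obtain ⟨s, h1, h2, a, ha, rfl⟩ := hb
    simpa using IsLegal.cond2 s h1 h2 a ha _ ih

lemma IsLegal.exists_isBlockChain {l : List ℕ} (h : P.IsLegal l) :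
    ∃ bs, P.IsBlockChain bs ∧ bs.flatten = l := by
  induction h with
  | cond1 m h1 h2 => exact ⟨_, .single_type1 ⟨m, h1, h2, rfl⟩, by simp⟩
  | cond2 s hs1 hs2 a ha rest _ ih =>
    obtain ⟨bs, hbs, rfl⟩ := ih
    exact ⟨_, .cons ⟨s, hs1, hs2, a, ha, rfl⟩ hbs, by simp⟩
  | cond2_last s hs1 hs2 a ha => exact ⟨_, .single_type2 ⟨s, hs1, hs2, a, ha, rfl⟩, by simp⟩

lemma IsBlockChain.blocks_flatten {bs : List (List ℕ)} (h : P.IsBlockChain bs) :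
    P.blocks bs.flatten = bs := by
  induction h with
  | single_type1 hb =>
    obtain ⟨m, h1, -, rfl⟩ := hb
    rw [List.flatten_singleton]
    exact P.blocks_coeffList h1
  | single_type2 hb =>
    obtain ⟨k, a, -, ha, rfl⟩ := hb.exists_eq
    rw [List.flatten_singleton, P.blocks_coeffList_append_cons [] ha.ne, blocks_nil]
  | cons hb _ ih =>
    obtain ⟨k, a, -, ha, rfl⟩ := hb.exists_eq
    rw [List.flatten_cons, List.append_assoc, List.singleton_append,
      P.blocks_coeffList_append_cons _ ha.ne, ih]

lemma IsBlockChain.ne_nil_and_length_le {bs : List (List ℕ)} (h : P.IsBlockChain bs)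
    {b : List ℕ} (hb : b ∈ bs) : b ≠ [] ∧ b.length ≤ P.L := by
  have htype2 {b : List ℕ} (hb : P.IsType2Block b) : b ≠ [] ∧ b.length ≤ P.L := by
    obtain ⟨k, a, hk, -, rfl⟩ := hb.exists_eq
    simpa using hk
  induction h with
  | single_type1 hb' =>
    obtain ⟨m, h1, h2, rfl⟩ := hb'
    obtain rfl := List.mem_singleton.mp hb
    exact ⟨by simpa [coeffList] using Nat.one_le_iff_ne_zero.mp h1, by simpa using h2.le⟩
  | single_type2 hb' => exact List.mem_singleton.mp hb ▸ htype2 hb'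
  | cons hb' _ ih =>
    rcases List.mem_cons.mp hb with rfl | hb
    · exact htype2 hb'
    · exact ih hb

lemma IsBlockChain.length_flatten_le {bs : List (List ℕ)} (h : P.IsBlockChain bs) :
    bs.flatten.length ≤ bs.length * P.L := by
  simpa using List.sum_le_card_nsmul (bs.map List.length) P.L fun n hn => by
    obtain ⟨b, hb, rfl⟩ := List.mem_map.mp hn
    exact (h.ne_nil_and_length_le hb).2

lemma isBlockChain_cons_iff {b : List ℕ} {bs : List (List ℕ)} (hbs : bs ≠ []) :
    P.IsBlockChain (b :: bs) ↔ P.IsType2Block b ∧ P.IsBlockChain bs := by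
  refine ⟨fun h => ?_, fun ⟨hb, hbs⟩ => .cons hb hbs⟩
  cases h with
  | single_type1 => exact absurd rfl hbs
  | single_type2 => exact absurd rfl hbs
  | cons hb hbs => exact ⟨hb, hbs⟩

lemma isBlockChain_append_pair_iff {u : List (List ℕ)} {B C : List ℕ} :
    P.IsBlockChain (u ++ [B, C]) ↔ P.IsType2Block B ∧ P.IsBlockChain (u ++ [C]) := by
  induction u with
  | nil =>
    rw [List.nil_append, isBlockChain_cons_iff (List.cons_ne_nil _ _), List.nil_append]
  | cons b u ih =>
    rw [List.cons_append, isBlockChain_cons_iff (by simp), ih, List.cons_append,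
      isBlockChain_cons_iff (by simp)]
    tauto

variable (P)

lemma ell_spec {t : ℕ} (ht : t < P.size) :
    1 ≤ P.ell t ∧ P.ell t ≤ P.L ∧
      P.coeffSum (P.ell t - 1) ≤ t ∧ t < P.coeffSum (P.ell t) := by
  have hmem : t < P.coeffSum (P.ell t) := Nat.sInf_mem (s := {s | t < P.coeffSum s}) ⟨P.L, ht⟩
  have hpos : 1 ≤ P.ell t := Nat.one_le_iff_ne_zero.mpr fun h => by simp [h, coeffSum] at hmem
  refine ⟨hpos, Nat.sInf_le (s := {s | t < P.coeffSum s}) ht, ?_, hmem⟩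
  by_contra! h
  have : P.ell t ≤ P.ell t - 1 := Nat.sInf_le h
  omega

lemma ell_eq {s t : ℕ} (hs : 1 ≤ s) (h1 : P.coeffSum (s - 1) ≤ t) (h2 : t < P.coeffSum s) :
    P.ell t = s := by
  refine le_antisymm (Nat.sInf_le (s := {s | t < P.coeffSum s}) h2) (by_contra fun hlt => ?_)
  have hmem : t < P.coeffSum (P.ell t) := Nat.sInf_mem (s := {s | t < P.coeffSum s}) ⟨s, h2⟩
  have := P.coeffSum_mono (show P.ell t ≤ s - 1 by omega)
  omega

lemma type2Block_eq (t : ℕ) :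
    P.type2Block t = P.coeffList (P.ell t - 1) ++ [t - P.coeffSum (P.ell t - 1)] := rfl

lemma isType2Block_type2Block {t : ℕ} (ht : t < P.size) : P.IsType2Block (P.type2Block t) := by
  obtain ⟨h1, h2, h3, h4⟩ := P.ell_spec ht
  have := P.coeffSum_succ (P.ell t - 1)
  rw [Nat.sub_add_cancel h1] at this
  exact ⟨P.ell t, h1, h2, t - P.coeffSum (P.ell t - 1), by omega, rfl⟩

lemma sum_type2Block {t : ℕ} (ht : t < P.size) : (P.type2Block t).sum = t := by
  simp [type2Block_eq, (P.ell_spec ht).2.2.1]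

lemma length_type2Block {t : ℕ} (ht : t < P.size) : (P.type2Block t).length = P.ell t := by
  simp [type2Block_eq, (P.ell_spec ht).1]

variable {P}

lemma IsType2Block.eq_type2Block_sum {B : List ℕ} (hB : P.IsType2Block B) :
    B = P.type2Block B.sum := by
  obtain ⟨k, a, -, ha, rfl⟩ := hB.exists_eq
  have hell : P.ell (P.coeffSum k + a) = k + 1 :=
    P.ell_eq (by omega) (by simp) (by rw [coeffSum_succ]; omega)
  simp [type2Block_eq, hell]

lemma IsBlockChain.insert_type2Block {u : List (List ℕ)} {C : List ℕ}
    (h : P.IsBlockChain (u ++ [C])) {t : ℕ} (ht : t < P.size) :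
    P.IsBlockChain (u ++ [P.type2Block t, C]) :=
  isBlockChain_append_pair_iff.mpr ⟨P.isType2Block_type2Block ht, h⟩

lemma Z_flatten {u : List (List ℕ)} {B C : List ℕ} (h : P.IsBlockChain (u ++ [B, C])) :
    P.Z (u ++ [B, C]).flatten = B.sum := by
  rw [Z, stlBlock, h.blocks_flatten]
  simp

lemma removeSTL_flatten {u : List (List ℕ)} {B C : List ℕ}
    (h : P.IsBlockChain (u ++ [B, C])) :
    P.removeSTL (u ++ [B, C]).flatten = (u ++ [C]).flatten := by
  rw [removeSTL, h.blocks_flatten]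
  simp [List.eraseIdx]

lemma insertSTL_flatten {u : List (List ℕ)} {C : List ℕ} (t : ℕ)
    (h : P.IsBlockChain (u ++ [C])) :
    P.insertSTL t (u ++ [C]).flatten = (u ++ [P.type2Block t, C]).flatten := by
  rw [insertSTL, h.blocks_flatten]
  simp [List.insertIdx]

lemma IsBlockChain.flatten_mem_Omega_iff {bs : List (List ℕ)} (h : P.IsBlockChain bs) {m : ℕ}
    (hm : 1 ≤ m) :
    bs.flatten ∈ P.Omega m ↔ 0 < bs.flatten.headI ∧ bs.flatten.length = m := by
  simp [P.mem_Omega_iff hm, LegalDecomp, h.isLegal_flatten]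

lemma exists_isBlockChain_of_mem_Omega {m : ℕ} {l : List ℕ} (hm : P.L < m)
    (hl : l ∈ P.Omega m) :
    ∃ u C, u ≠ [] ∧ P.IsBlockChain (u ++ [C]) ∧ l = (u ++ [C]).flatten := by
  obtain ⟨⟨hleg, -⟩, hlen⟩ := (P.mem_Omega_iff (by omega)).mp hl
  obtain ⟨bs, hbs, rfl⟩ := hleg.exists_isBlockChain
  have hle := hbs.length_flatten_le
  rcases bs.eq_nil_or_concat' with rfl | ⟨u, C, rfl⟩
  · simp at hlen; omega
  refine ⟨u, C, fun hu => ?_, hbs, rfl⟩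
  subst hu
  simp at hlen hle
  omega

lemma exists_isBlockChain_of_mem_Omega_of_Z_eq {n t : ℕ} {l : List ℕ} (hn : 2 * P.L < n)
    (hl : l ∈ P.Omega n) (hz : P.Z l = t) :
    ∃ u C, u ≠ [] ∧ P.IsBlockChain (u ++ [C]) ∧ l = (u ++ [P.type2Block t, C]).flatten := by
  subst hz
  obtain ⟨u', C, hu', hbs, rfl⟩ := P.exists_isBlockChain_of_mem_Omega (by omega) hl
  have hlen := ((P.mem_Omega_iff (by omega)).mp hl).2
  obtain ⟨u, B, rfl⟩ := (u'.eq_nil_or_concat').resolve_left hu'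
  rw [List.append_assoc, List.singleton_append] at hbs ⊢
  rw [P.Z_flatten hbs, ← (isBlockChain_append_pair_iff.mp hbs).1.eq_type2Block_sum]
  refine ⟨u, C, fun hu => ?_, (isBlockChain_append_pair_iff.mp hbs).2, rfl⟩
  subst hu
  have := hbs.length_flatten_le
  simp at this hlen
  omega

lemma flatten_insert_mem_Omega_iff {u : List (List ℕ)} {C : List ℕ} (hu : u ≠ [])
    (hch : P.IsBlockChain (u ++ [C])) {t m : ℕ} (ht : t < P.size) (hm : 1 ≤ m) :
    (u ++ [P.type2Block t, C]).flatten ∈ P.Omega (m + P.ell t) ↔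
      (u ++ [C]).flatten ∈ P.Omega m := by
  have hch' := hch.insert_type2Block ht
  have hhead (X : List (List ℕ)) : (u ++ X).flatten.headI = u.flatten.headI := by
    obtain ⟨b, u, rfl⟩ := List.exists_cons_of_ne_nil hu
    rw [List.flatten_append, List.headI_append_of_ne_nil, List.flatten_cons]
    exact List.append_ne_nil_of_left_ne_nil (hch.ne_nil_and_length_le (b := b) (by simp)).1 _
  rw [hch'.flatten_mem_Omega_iff (by omega), hch.flatten_mem_Omega_iff hm, hhead, hhead]
  simp [P.length_type2Block ht]
  omega

theorem bijOn_removeSTL {n t : ℕ} (hn : 2 * P.L < n) (ht : t < P.size) :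
    Set.BijOn P.removeSTL (P.Omega n ∩ {l | P.Z l = t}) (P.Omega (n - P.ell t)) := by
  obtain ⟨-, hell, -, -⟩ := P.ell_spec ht
  have hn' : n - P.ell t + P.ell t = n := by omega
  refine Set.InvOn.bijOn (f' := P.insertSTL t) ⟨?_, ?_⟩ ?_ ?_
  · rintro l ⟨hl, hz⟩
    obtain ⟨u, C, -, hch, rfl⟩ := P.exists_isBlockChain_of_mem_Omega_of_Z_eq hn hl hz
    rw [removeSTL_flatten (hch.insert_type2Block ht), insertSTL_flatten _ hch]
  · intro l hl
    obtain ⟨u, C, -, hch, rfl⟩ := P.exists_isBlockChain_of_mem_Omega (by omega) hl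
    rw [insertSTL_flatten _ hch, removeSTL_flatten (hch.insert_type2Block ht)]
  · rintro l ⟨hl, hz⟩
    obtain ⟨u, C, hu, hch, rfl⟩ := P.exists_isBlockChain_of_mem_Omega_of_Z_eq hn hl hz
    rw [← hn'] at hl
    rw [removeSTL_flatten (hch.insert_type2Block ht)]
    exact (flatten_insert_mem_Omega_iff hu hch ht (by omega)).mp hl
  · intro l hl
    obtain ⟨u, C, hu, hch, rfl⟩ := P.exists_isBlockChain_of_mem_Omega (by omega) hl
    rw [insertSTL_flatten _ hch]
    refine ⟨hn' ▸ (flatten_insert_mem_Omega_iff hu hch ht (by omega)).mpr hl, ?_⟩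
    exact (Z_flatten (hch.insert_type2Block ht)).trans (P.sum_type2Block ht)

lemma sum_eq_sum_removeSTL_add {n t : ℕ} (hn : 2 * P.L < n) (ht : t < P.size) {l : List ℕ}
    (hl : l ∈ P.Omega n ∩ {l | P.Z l = t}) : l.sum = (P.removeSTL l).sum + t := by
  obtain ⟨u, C, -, hch, rfl⟩ := P.exists_isBlockChain_of_mem_Omega_of_Z_eq hn hl.1 hl.2
  rw [removeSTL_flatten (hch.insert_type2Block ht)]
  simp [P.sum_type2Block ht]
  omega

lemma isBlockChain_cons_replicate {b : List ℕ} (hb : P.IsType2Block b) (j : ℕ) :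
    P.IsBlockChain (b :: List.replicate j [0]) := by
  induction j generalizing b with
  | zero => exact .single_type2 hb
  | succ j ih => exact .cons hb (ih ⟨1, le_rfl, P.L_pos, 0, P.c1_pos, rfl⟩)

lemma Omega_nonempty_of_isType2Block {b : List ℕ} (hb : P.IsType2Block b) (hhead : 0 < b.headI)
    {m : ℕ} (hm : b.length ≤ m) : (P.Omega m).Nonempty := by
  have hch := isBlockChain_cons_replicate hb (m - b.length)
  have hne := (hch.ne_nil_and_length_le (b := b) (by simp)).1
  have hlen := List.length_pos_iff.mpr hne
  refine ⟨_, (hch.flatten_mem_Omega_iff (by omega)).mpr ⟨?_, ?_⟩⟩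
  · rwa [List.flatten_cons, List.headI_append_of_ne_nil _ hne]
  · simp
    omega

lemma Omega_nonempty (h : 1 < P.size) {m : ℕ} (hm : P.L ≤ m) : (P.Omega m).Nonempty := by
  rcases P.one_lt_size_iff.mp h with hc | hL
  · exact Omega_nonempty_of_isType2Block ⟨1, le_rfl, P.L_pos, 1, hc, rfl⟩ (by simp)
      (by simp; linarith [P.L_pos])
  · refine Omega_nonempty_of_isType2Block ⟨P.L, P.L_pos, le_rfl, 0, P.cL_pos, rfl⟩ ?_ ?_
    · change 0 < (P.coeffList (P.L - 1) ++ [0]).headI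
      rw [List.headI_append_of_ne_nil _ (List.ne_nil_of_length_pos (by simp; omega)),
        P.headI_coeffList (by omega)]
      exact P.c1_pos
    · simpa using Nat.sub_add_cancel P.L_pos |>.trans_le hm

lemma expectOn_eq_of_bijOn {A B : Set (List ℕ)} {e : List ℕ → List ℕ} {g g' : List ℕ → ℝ}
    (he : Set.BijOn e A B) (hg : ∀ x ∈ A, g x = g' (e x)) :
    expectOn A g = expectOn B g' := by
  rw [expectOn, expectOn, finsum_mem_eq_of_bijOn e he hg, ← he.image_eq, he.injOn.ncard_image]

lemma expectOn_add_const {B : Set (List ℕ)} (hB : B.Finite) (hne : B.Nonempty)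
    (g : List ℕ → ℝ) (c : ℝ) : expectOn B (fun x => g x + c) = expectOn B g + c := by
  have hcard : (B.ncard : ℝ) ≠ 0 := by exact_mod_cast (Set.ncard_pos hB).mpr hne |>.ne'
  rw [expectOn, expectOn, finsum_mem_add_distrib hB, finsum_mem_eq_finite_toFinset_sum _ hB,
    finsum_mem_eq_finite_toFinset_sum _ hB, Finset.sum_const, nsmul_eq_mul,
    ← Set.ncard_eq_toFinset_card B hB]
  field_simp

variable (P)

theorem condExpect_sum_eq_expectK_add {n t : ℕ} (hn : 2 * P.L < n) (ht : t < P.size) :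
    P.condExpect n t (fun l => (l.sum : ℝ)) = P.expectK (n - P.ell t) + t := by
  have hbij := P.bijOn_removeSTL hn ht
  have hm : P.L < n - P.ell t := by have := (P.ell_spec ht).2.1; omega
  rcases (P.Omega (n - P.ell t)).eq_empty_or_nonempty with hB | hB
  · -- only the degenerate sequence `H ≡ 1` (`L = c 1 = 1`) has empty `Ω`'s; there `S = 1`
    have ht0 : t = 0 := by
      have := mt (P.Omega_nonempty · hm.le) (Set.not_nonempty_iff_eq_empty.mpr hB)
      omega
    have hA : P.Omega n ∩ {l | P.Z l = t} = ∅ := by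
      simpa [hB] using hbij.image_eq
    rw [condExpect, expectK, expect, hA, hB, ht0]
    simp [expectOn]
  · rw [condExpect, expectK, expect, ← expectOn_add_const (P.Omega_finite (by omega)) hB]
    exact expectOn_eq_of_bijOn hbij fun l hl => by
      rw [P.sum_eq_sum_removeSTL_add hn ht hl]
      push_cast
      rfl

end PLRS

/-- If `E[K_r] = a·r + b + f r` for `r > L`, then for `n > 2L`, `0 ≤ t < S`:
`E[K_n | Z_n = t] = a(n - ℓ(t)) + b + f(n - ℓ(t)) + t`. -/
theorem condExpectK_eq (P : PLRS) (a b : ℝ) (f : ℕ → ℝ)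
    (hf : ∀ r : ℕ, P.L < r → P.expectK r = a * (r : ℝ) + b + f r)
    (n t : ℕ) (hn : 2 * P.L < n) (ht : t < P.size) :
    P.condExpect n t (fun l => (l.sum : ℝ)) =
      a * ((n : ℝ) - (P.ell t : ℝ)) + b + f (n - P.ell t) + (t : ℝ) := by
  have hell := (P.ell_spec ht).2.1
  rw [P.condExpect_sum_eq_expectK_add hn ht, hf _ (by omega), Nat.cast_sub (by omega)]
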